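/- arXiv:1401.8044 — 6 statements merged into one kernel-verified Lean document; each statement's English description precedes it below -/
import Mathlib

section
/- Let A be an N×N real symmetric positive-definite matrix, let V ∈ ℝ^{N×n} have full column rank n, and let S ∈ {0,1}^{N×m} be a sampling matrix with n ≤ m ≤ N. Then there exists a matrix Z ∈ ℝ^{m×n} such that Zᵀ (SᵀAS) Z = VᵀAV. (In particular, the reduced-basis sparsification approximation is exact for a parameter-independent matrix whenever the number of samples is at least the reduced dimension.) -/
/-!
Write `Sᵀ A S = Qᴴ Q` with `Q` invertible (it is positive definite) and `Vᵀ A V = Pᴴ P` with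
`P` having `m ≥ n` rows (pad a square root of the positive semidefinite `Vᵀ A V` by zero rows).
Then `Z = Q⁻¹ P` works.
-/

open Matrix
open scoped ComplexOrder

/-- The `N × m` sampling matrix whose `j`-th column is the `ι j`-th column of the
`N × N` identity matrix. -/
def samplingMatrix {N m : ℕ} (ι : Fin m → Fin N) : Matrix (Fin N) (Fin m) ℝ :=
  fun i j => if i = ι j then 1 else 0

namespace Matrix

variable {𝕜 m n : Type*} [RCLike 𝕜] [Fintype m] [Fintype n] [DecidableEq m] [DecidableEq n]

open scoped MatrixOrder in
theorem PosSemidef.exists_conjTranspose_mul_self_eq_of_card_le {C : Matrix n n 𝕜}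
    (hC : C.PosSemidef) (hnm : Fintype.card n ≤ Fintype.card m) :
    ∃ P : Matrix m n 𝕜, Pᴴ * P = C := by
  obtain ⟨M, rfl⟩ := CStarAlgebra.nonneg_iff_eq_star_mul_self.mp hC.nonneg
  obtain ⟨e⟩ := Function.Embedding.nonempty_of_card_le hnm
  have hE : ((1 : Matrix m m 𝕜).submatrix id e)ᴴ * (1 : Matrix m m 𝕜).submatrix id e = 1 := by
    rw [conjTranspose_submatrix, conjTranspose_one,
      ← submatrix_mul _ _ _ _ _ Function.bijective_id, Matrix.one_mul, submatrix_one_embedding]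
  refine ⟨(1 : Matrix m m 𝕜).submatrix id e * M, ?_⟩
  rw [conjTranspose_mul, Matrix.mul_assoc, ← Matrix.mul_assoc _ _ M, hE, Matrix.one_mul,
    star_eq_conjTranspose]

open scoped MatrixOrder in
theorem PosDef.exists_conjTranspose_mul_mul_eq {B : Matrix m m 𝕜} {C : Matrix n n 𝕜}
    (hB : B.PosDef) (hC : C.PosSemidef) (hnm : Fintype.card n ≤ Fintype.card m) :
    ∃ Z : Matrix m n 𝕜, Zᴴ * B * Z = C := by
  obtain ⟨Q, rfl⟩ := CStarAlgebra.nonneg_iff_eq_star_mul_self.mp hB.posSemidef.nonneg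
  have hQ : IsUnit Q.det := (isUnit_iff_isUnit_det Q).mp (isUnit_of_mul_isUnit_right hB.isUnit)
  obtain ⟨P, rfl⟩ := hC.exists_conjTranspose_mul_self_eq_of_card_le hnm
  refine ⟨Q⁻¹ * P, ?_⟩
  rw [star_eq_conjTranspose, conjTranspose_mul, conjTranspose_nonsing_inv]
  simp only [Matrix.mul_assoc]
  rw [mul_nonsing_inv_cancel_left _ _ hQ,
    nonsing_inv_mul_cancel_left _ _ (by simpa only [det_conjTranspose] using hQ.star)]

end Matrix

lemma samplingMatrix_transpose_mul_mul {N m : ℕ} (ι : Fin m → Fin N)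
    (A : Matrix (Fin N) (Fin N) ℝ) :
    (samplingMatrix ι)ᵀ * A * samplingMatrix ι = A.submatrix ι ι := by
  ext i j
  simp [samplingMatrix, mul_apply]

theorem stmt1_general {N n m : ℕ} (hnm : n ≤ m)
    (A : Matrix (Fin N) (Fin N) ℝ) (hA : A.PosDef)
    (V : Matrix (Fin N) (Fin n) ℝ)
    (ι : Fin m → Fin N) (hι : Function.Injective ι)
    (S : Matrix (Fin N) (Fin m) ℝ) (hS : S = samplingMatrix ι) :
    ∃ Z : Matrix (Fin m) (Fin n) ℝ, Zᵀ * (Sᵀ * A * S) * Z = Vᵀ * A * V := by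
  have hB : (Sᵀ * A * S).PosDef := by
    rw [hS, samplingMatrix_transpose_mul_mul]
    exact hA.submatrix hι
  have hC : (Vᵀ * A * V).PosSemidef := by
    simpa using hA.posSemidef.conjTranspose_mul_mul_same V
  simpa using hB.exists_conjTranspose_mul_mul_eq hC (by simpa using hnm)

/-- RBS exactness for a parameter-independent SPD matrix: with at least `n` samples there
is a sparse reduced basis `Z` with `Zᵀ (Sᵀ A S) Z = Vᵀ A V`. -/
theorem stmt1 {N n m : ℕ} (hnm : n ≤ m) (hmN : m ≤ N)
    (A : Matrix (Fin N) (Fin N) ℝ) (hA : A.PosDef)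
    (V : Matrix (Fin N) (Fin n) ℝ) (hV : V.rank = n)
    (ι : Fin m → Fin N) (hι : Function.Injective ι)
    (S : Matrix (Fin N) (Fin m) ℝ) (hS : S = samplingMatrix ι) :
    ∃ Z : Matrix (Fin m) (Fin n) ℝ, Zᵀ * (Sᵀ * A * S) * Z = Vᵀ * A * V :=
  stmt1_general hnm A hA V ι hι S hS
end

section
/- Let B_s be an m×m real symmetric positive-definite matrix and B_r an (m−1)×(m−1) real symmetric positive-definite matrix whose eigenvalues interlace those of B_s, i.e., λ^{(s)}_i ≤ λ^{(r)}_i ≤ λ^{(s)}_{i+1} for i = 1, …, m−1, where λ^{(s)}_1 ≤ … ≤ λ^{(s)}_m are the eigenvalues of B_s and λ^{(r)}_1 ≤ … ≤ λ^{(r)}_{m−1} are the eigenvalues of B_r. Then there exists a matrix U ∈ ℝ^{m×(m−1)} with orthonormal columns (UᵀU = I_{m−1}) such that Uᵀ B_s U = B_r. -/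
/-!
Conjugating by orthogonal diagonalizations reduces the claim to `diagonal lam` and
`diagonal mu`. When the interlacing is strict, the partial-fraction weights
`w p = ∏ k, (lam p - mu k) / ∏ k ≠ p, (lam p - lam k)` are positive, and Lagrange
interpolation of `∏ k, (X - mu k)` at the nodes `lam` gives `∑ p, w p / (mu q - lam p) = 0`.
Hence the vectors `v q = (√(w p) / (mu q - lam p))_p` satisfy
`diagonal lam * v q = mu q • v q - √w` with `√w` orthogonal to every `v q`, so they are
pairwise orthogonal and, once normalized, compress `diagonal lam` to `diagonal mu`.
The general case follows by perturbing to strict interlacing and passing to the limit in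
the compact set of matrices with orthonormal columns.
-/

open Matrix

/-- `lam` is the increasing (with multiplicity) sequence of eigenvalues of the real
symmetric matrix `B`: there is an orthogonal matrix diagonalizing `B` to `diagonal lam`. -/
def IsSortedEigs {k : ℕ} (B : Matrix (Fin k) (Fin k) ℝ) (lam : Fin k → ℝ) : Prop :=
  Monotone lam ∧
    ∃ Q : Matrix (Fin k) (Fin k) ℝ, Qᵀ * Q = 1 ∧ Qᵀ * B * Q = Matrix.diagonal lam

open Finset Polynomial Lagrange

theorem Lagrange.sum_nodalWeight_mul_inv_sub_mul_eval_eq_zero {F ι : Type*} [Field F]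
    [DecidableEq ι] {s : Finset ι} {v : ι → F} (hvs : Set.InjOn v s) {P : F[X]}
    (hP : P.degree < #s) {x : F} (hx : ∀ i ∈ s, x ≠ v i) (hPx : P.eval x = 0) :
    ∑ i ∈ s, nodalWeight s v i * (x - v i)⁻¹ * P.eval (v i) = 0 := by
  have h := eval_interpolate_not_at_node (fun i => P.eval (v i)) hx
  rw [← eq_interpolate hvs hP, hPx] at h
  exact (mul_eq_zero.mp h.symm).resolve_left (eval_nodal_not_at_node hx)

theorem Fin.nodalWeight_univ {F : Type*} [Field F] {n : ℕ} (v : Fin (n + 1) → F)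
    (i : Fin (n + 1)) : nodalWeight univ v i = ∏ k, (v i - v (i.succAbove k))⁻¹ := by
  rw [nodalWeight, Fin.univ_succAbove n i, erase_cons, prod_map]
  rfl

def IsCompression {R m n : Type*} [CommRing R] [Fintype n] [DecidableEq m]
    (B : Matrix m m R) (A : Matrix n n R) : Prop :=
  ∃ U : Matrix n m R, Uᵀ * U = 1 ∧ Uᵀ * A * U = B

section Compression

variable {R l m n : Type*} [CommRing R] [Fintype m] [Fintype n] [DecidableEq l] [DecidableEq m]

theorem IsCompression.trans {C : Matrix l l R} {B : Matrix m m R} {A : Matrix n n R}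
    (hCB : IsCompression C B) (hBA : IsCompression B A) : IsCompression C A := by
  obtain ⟨V, hV, rfl⟩ := hCB
  obtain ⟨U, hU, rfl⟩ := hBA
  refine ⟨U * V, ?_, ?_⟩
  · rw [transpose_mul, Matrix.mul_assoc, ← Matrix.mul_assoc Uᵀ, hU, Matrix.one_mul, hV]
  · simp only [transpose_mul, Matrix.mul_assoc]

theorem isCompression_transpose_mul_mul [DecidableEq n] {Q : Matrix n n R} (hQ : Qᵀ * Q = 1)
    (A : Matrix n n R) : IsCompression (Qᵀ * A * Q) A :=
  ⟨Q, hQ, rfl⟩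

theorem isCompression_of_transpose_mul_mul [DecidableEq n] {Q : Matrix n n R} (hQ : Qᵀ * Q = 1)
    (A : Matrix n n R) : IsCompression A (Qᵀ * A * Q) := by
  have hQ' : Q * Qᵀ = 1 := mul_eq_one_comm.mp hQ
  refine ⟨Qᵀ, by rwa [transpose_transpose], ?_⟩
  simp only [transpose_transpose, ← Matrix.mul_assoc, hQ', Matrix.one_mul]
  rw [Matrix.mul_assoc, hQ', Matrix.mul_one]

end Compression

theorem isCompression_diagonal_of_transpose_mul_mul_eq {n k : Type*} [Fintype n] [Fintype k]
    [DecidableEq k] {A : Matrix n n ℝ} (hA : Aᵀ = A) {V : Matrix n k ℝ} {mu : k → ℝ}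
    (hmu : Function.Injective mu) (hV : ∀ q, ∃ p, V p q ≠ 0)
    (hAV : Vᵀ * A * V = Vᵀ * V * diagonal mu) : IsCompression (diagonal mu) A := by
  set g : k → ℝ := fun q => (Vᵀ * V) q q
  have hcomm : diagonal mu * (Vᵀ * V) = Vᵀ * V * diagonal mu := by
    have h := congrArg transpose hAV
    simp only [transpose_mul, transpose_transpose, hA, diagonal_transpose, ← Matrix.mul_assoc]
      at h
    rw [← Matrix.mul_assoc, ← h, hAV]
  have hG : Vᵀ * V = diagonal g := by
    ext q q'
    by_cases hqq : q = q'
    · subst hqq; simp [g]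
    have h := congrFun₂ hcomm q q'
    rw [diagonal_mul, mul_diagonal] at h
    rw [diagonal_apply_ne _ hqq]
    have h' : (mu q - mu q') * (Vᵀ * V) q q' = 0 := by linear_combination h
    exact (mul_eq_zero.mp h').resolve_left (sub_ne_zero.mpr (hmu.ne hqq))
  have hg : ∀ q, 0 < g q := fun q => by
    obtain ⟨p, hp⟩ := hV q
    exact sum_pos' (fun r _ => mul_self_nonneg (V r q)) ⟨p, mem_univ p, mul_self_pos.mpr hp⟩
  set c : k → ℝ := fun q => (√(g q))⁻¹
  have hc : ∀ q, c q * g q * c q = 1 := fun q => by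
    rw [show c q * g q * c q = g q / √(g q) ^ 2 by simp only [c]; ring,
      Real.sq_sqrt (hg q).le, div_self (hg q).ne']
  refine ⟨V * diagonal c, ?_, ?_⟩
  · rw [transpose_mul, diagonal_transpose, Matrix.mul_assoc, ← Matrix.mul_assoc Vᵀ, hG,
      diagonal_mul_diagonal, diagonal_mul_diagonal, ← diagonal_one]
    congr 1
    funext q
    linear_combination hc q
  · have hconj : (V * diagonal c)ᵀ * A * (V * diagonal c)
        = diagonal c * (Vᵀ * A * V) * diagonal c := by
      simp only [transpose_mul, diagonal_transpose, Matrix.mul_assoc]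
    rw [hconj, hAV, hG, diagonal_mul_diagonal, diagonal_mul_diagonal, diagonal_mul_diagonal]
    congr 1
    funext q
    linear_combination mu q * hc q

section StrictInterlacing

variable {n : ℕ} {lam : Fin (n + 1) → ℝ} {mu : Fin n → ℝ}

theorem strictMono_of_strict_interlace (hlo : ∀ i, lam i.castSucc < mu i)
    (hhi : ∀ i, mu i < lam i.succ) : StrictMono lam :=
  Fin.strictMono_iff_lt_succ.mpr fun i => (hlo i).trans (hhi i)

theorem ne_of_strict_interlace (hlo : ∀ i, lam i.castSucc < mu i)
    (hhi : ∀ i, mu i < lam i.succ) (p : Fin (n + 1)) (q : Fin n) : lam p ≠ mu q := by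
  have hlam := (strictMono_of_strict_interlace hlo hhi).monotone
  rcases le_or_gt p q.castSucc with h | h
  · exact ((hlam h).trans_lt (hlo q)).ne
  · exact ((hhi q).trans_le (hlam (Fin.castSucc_lt_iff_succ_le.mp h))).ne'

theorem nodalWeight_mul_eval_nodal_pos (hlo : ∀ i, lam i.castSucc < mu i)
    (hhi : ∀ i, mu i < lam i.succ) (p : Fin (n + 1)) :
    0 < nodalWeight univ lam p * (nodal univ mu).eval (lam p) := by
  have hlam := (strictMono_of_strict_interlace hlo hhi).monotone
  rw [Fin.nodalWeight_univ, eval_nodal, ← prod_mul_distrib]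
  refine prod_pos fun k _ => ?_
  rcases lt_or_ge k.castSucc p with h | h
  · rw [Fin.succAbove_of_castSucc_lt _ _ h]
    have : mu k < lam p := (hhi k).trans_le (hlam (Fin.castSucc_lt_iff_succ_le.mp h))
    exact mul_pos (inv_pos.mpr (by linarith [hlo k])) (by linarith)
  · rw [Fin.succAbove_of_le_castSucc _ _ h]
    have : lam p < mu k := (hlam h).trans_lt (hlo k)
    exact mul_pos_of_neg_of_neg (inv_lt_zero.mpr (by linarith [hhi k])) (by linarith)

theorem isCompression_diagonal_of_strict_interlace (hlo : ∀ i, lam i.castSucc < mu i)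
    (hhi : ∀ i, mu i < lam i.succ) : IsCompression (diagonal mu) (diagonal lam) := by
  set w : Fin (n + 1) → ℝ := fun p => nodalWeight univ lam p * (nodal univ mu).eval (lam p)
  have hw : ∀ p, 0 < w p := nodalWeight_mul_eval_nodal_pos hlo hhi
  have hne := ne_of_strict_interlace hlo hhi
  have hsum : ∀ q, ∑ p, (mu q - lam p)⁻¹ * w p = 0 := fun q => by
    have hdeg : (nodal univ mu).degree < #(univ : Finset (Fin (n + 1))) := by
      rw [degree_nodal, card_univ, card_univ, Fintype.card_fin, Fintype.card_fin]
      exact_mod_cast n.lt_succ_self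
    rw [← sum_nodalWeight_mul_inv_sub_mul_eval_eq_zero
      (strictMono_of_strict_interlace hlo hhi).injective.injOn hdeg
      (fun p _ => (hne p q).symm) (eval_nodal_at_node (mem_univ q))]
    exact sum_congr rfl fun p _ => by ring
  clear_value w
  have hmu : StrictMono mu := fun i j hij =>
    ((hhi i).trans_le ((strictMono_of_strict_interlace hlo hhi).monotone
      (Fin.succ_le_castSucc_iff.mpr hij))).trans (hlo j)
  set V : Matrix (Fin (n + 1)) (Fin n) ℝ := of fun p q => √(w p) / (mu q - lam p)
  have hV : ∀ q, V 0 q ≠ 0 := fun q =>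
    div_ne_zero (Real.sqrt_pos.mpr (hw 0)).ne' (sub_ne_zero.mpr (hne 0 q).symm)
  refine isCompression_diagonal_of_transpose_mul_mul_eq (diagonal_transpose lam) hmu.injective
    (fun q => ⟨0, hV q⟩) ?_
  ext q q'
  have key : ∀ p,
      V p q * lam p * V p q' = V p q * V p q' * mu q' - (mu q - lam p)⁻¹ * w p := by
    intro p
    have hs := Real.mul_self_sqrt (hw p).le
    have h1 := sub_ne_zero.mpr (hne p q).symm
    have h2 := sub_ne_zero.mpr (hne p q').symm
    simp only [V, of_apply]
    field_simp
    linear_combination (lam p - mu q') * hs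
  rw [mul_diagonal, mul_apply, mul_apply, sum_mul]
  simp only [mul_diagonal, transpose_apply]
  rw [sum_congr rfl (fun p _ => key p), sum_sub_distrib, hsum, sub_zero]

end StrictInterlacing

theorem isCompact_setOf_transpose_mul_self_eq_one {n k : Type*} [Fintype n] [Fintype k]
    [DecidableEq k] : IsCompact {U : Matrix n k ℝ | Uᵀ * U = 1} := by
  refine (isCompact_univ_pi fun _ => isCompact_univ_pi fun _ =>
    isCompact_Icc (a := -1) (b := 1)).of_isClosed_subset
    (isClosed_eq (by fun_prop) continuous_const) fun (U : Matrix n k ℝ) hU p _ q _ => ?_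
  have hcol : ∑ r, U r q * U r q = 1 := by
    simpa [mul_apply] using congrFun₂ hU q q
  have hpq : U p q * U p q ≤ 1 :=
    hcol ▸ single_le_sum (f := fun r => U r q * U r q) (fun r _ => mul_self_nonneg _) (mem_univ p)
  exact abs_le.mp (abs_le_one_iff_mul_self_le_one.mpr hpq)

theorem IsCompact.exists_mem_of_forall_mem_Ioc {X : Type*} [TopologicalSpace X] {K : Set X}
    (hK : IsCompact K) {P : ℝ → X → Prop} (hP : IsClosed {p : ℝ × X | P p.1 p.2})
    (h : ∀ t ∈ Set.Ioc (0 : ℝ) 1, ∃ x ∈ K, P t x) : ∃ x ∈ K, P 0 x := by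
  set C := Set.Icc (0 : ℝ) 1 ×ˢ K ∩ {p : ℝ × X | P p.1 p.2}
  have hC : IsClosed (Prod.fst '' C) :=
    (((isCompact_Icc.prod hK).inter_right hP).image continuous_fst).isClosed
  have hsub : Set.Ioc (0 : ℝ) 1 ⊆ Prod.fst '' C := fun t ht => by
    obtain ⟨x, hx, hPx⟩ := h t ht
    exact ⟨(t, x), ⟨⟨Set.Ioc_subset_Icc_self ht, hx⟩, hPx⟩, rfl⟩
  have h0 : (0 : ℝ) ∈ Prod.fst '' C := by
    refine closure_minimal hsub hC ?_
    rw [closure_Ioc zero_ne_one]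
    exact Set.left_mem_Icc.mpr zero_le_one
  obtain ⟨⟨_, x⟩, ⟨⟨_, hx⟩, hPx⟩, rfl⟩ := h0
  exact ⟨x, hx, hPx⟩

theorem isCompression_diagonal_of_interlace {n : ℕ} {lam : Fin (n + 1) → ℝ}
    {mu : Fin n → ℝ} (h : ∀ i, lam i.castSucc ≤ mu i ∧ mu i ≤ lam i.succ) :
    IsCompression (diagonal mu) (diagonal lam) := by
  set lam' : ℝ → Fin (n + 1) → ℝ := fun t p => lam p + t * (2 * p)
  set mu' : ℝ → Fin n → ℝ := fun t q => mu q + t * (2 * q + 1)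
  have hP : IsClosed {p : ℝ × Matrix (Fin (n + 1)) (Fin n) ℝ |
      p.2ᵀ * diagonal (lam' p.1) * p.2 = diagonal (mu' p.1)} :=
    isClosed_eq (by fun_prop) (by fun_prop)
  obtain ⟨U, hU, hUlam⟩ :=
    isCompact_setOf_transpose_mul_self_eq_one.exists_mem_of_forall_mem_Ioc hP fun t ht =>
      isCompression_diagonal_of_strict_interlace (lam := lam' t) (mu := mu' t)
        (fun i => by simp only [Fin.val_castSucc, lam', mu']; linarith [(h i).1, ht.1])
        (fun i => by
          simp only [Fin.val_succ, Nat.cast_add, Nat.cast_one, mu', lam']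
          linarith [(h i).2, ht.1])
  exact ⟨U, hU, by simpa only [zero_mul, add_zero, lam', mu'] using hUlam⟩

theorem stmt3_general {m : ℕ}
    (Bs : Matrix (Fin (m + 1)) (Fin (m + 1)) ℝ)
    (Br : Matrix (Fin m) (Fin m) ℝ)
    (lams : Fin (m + 1) → ℝ) (lamr : Fin m → ℝ)
    (hs : IsSortedEigs Bs lams) (hr : IsSortedEigs Br lamr)
    (hinter : ∀ i : Fin m, lams i.castSucc ≤ lamr i ∧ lamr i ≤ lams i.succ) :
    ∃ U : Matrix (Fin (m + 1)) (Fin m) ℝ, Uᵀ * U = 1 ∧ Uᵀ * Bs * U = Br := by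
  obtain ⟨-, Qs, hQs, hBs⟩ := hs
  obtain ⟨-, Qr, hQr, hBr⟩ := hr
  have hdiag := isCompression_diagonal_of_interlace hinter
  rw [← hBs, ← hBr] at hdiag
  exact ((isCompression_of_transpose_mul_mul hQr Br).trans hdiag).trans
    (isCompression_transpose_mul_mul hQs Bs)

/-- Converse Cauchy interlacing, codimension-one case: if the eigenvalues of the
`m × m` SPD matrix `B_r` interlace those of the `(m+1) × (m+1)` SPD matrix `B_s`,
then `B_r = Uᵀ B_s U` for some matrix `U` with orthonormal columns. -/
theorem stmt3 {m : ℕ}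
    (Bs : Matrix (Fin (m + 1)) (Fin (m + 1)) ℝ) (hBs : Bs.PosDef)
    (Br : Matrix (Fin m) (Fin m) ℝ) (hBr : Br.PosDef)
    (lams : Fin (m + 1) → ℝ) (lamr : Fin m → ℝ)
    (hs : IsSortedEigs Bs lams) (hr : IsSortedEigs Br lamr)
    (hinter : ∀ i : Fin m, lams i.castSucc ≤ lamr i ∧ lamr i ≤ lams i.succ) :
    ∃ U : Matrix (Fin (m + 1)) (Fin m) ℝ, Uᵀ * U = 1 ∧ Uᵀ * Bs * U = Br :=
  stmt3_general Bs Br lams lamr hs hr hinter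
end

section
/- Let D_s ∈ ℝ^{m×m} and D_r ∈ ℝ^{n×n} be symmetric positive-definite matrices with lower-triangular Cholesky factors L_s and L_r (D_s = L_s L_sᵀ, D_r = L_r L_rᵀ), and let B_s ∈ ℝ^{m×m} and B_r ∈ ℝ^{n×n} be symmetric positive-definite matrices, with m ≥ n. Then there exists Z ∈ ℝ^{m×n} satisfying both Zᵀ D_s Z = D_r and Zᵀ B_s Z = B_r if and only if there exists U ∈ ℝ^{m×n} with orthonormal columns (UᵀU = Iₙ) satisfying Uᵀ (L_s⁻¹ B_s L_s⁻ᵀ) U = L_r⁻¹ B_r L_r⁻ᵀ. The correspondence is given by U = L_sᵀ Z L_r⁻ᵀ. -/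
/-! Cholesky factors are invertible, being triangular with positive diagonal. For invertible `L`,
congruence by `Lᵀ` undoes the whitening `B ↦ L⁻¹ B L⁻ᵀ`; hence under the invertible substitution
`U = Lsᵀ Z Lr⁻ᵀ` we get `Uᵀ (Ls⁻¹ B Ls⁻ᵀ) U = Lr⁻¹ (Zᵀ B Z) Lr⁻ᵀ` for every `B`. Whitening `L Lᵀ`
gives the identity, so the `D`-equations become `Uᵀ U = 1` and the `B`-equations the whitened ones. -/

open Matrix

/-- `L` is the lower-triangular Cholesky factor of `D`: `L` is lower triangular with
positive diagonal entries and `L Lᵀ = D`. -/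
def IsCholeskyFactor {k : ℕ} (L D : Matrix (Fin k) (Fin k) ℝ) : Prop :=
  (∀ i j : Fin k, i < j → L i j = 0) ∧ (∀ i : Fin k, 0 < L i i) ∧ L * Lᵀ = D

theorem IsCholeskyFactor.isUnit_det {k : ℕ} {L D : Matrix (Fin k) (Fin k) ℝ}
    (hL : IsCholeskyFactor L D) : IsUnit L.det := by
  have hlower : L.IsLowerTriangular := fun i j hij => hL.1 i j hij
  rw [det_of_isLowerTriangular L hlower, isUnit_iff_ne_zero]
  exact (Finset.prod_pos fun i _ => hL.2.1 i).ne'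

section Whitening

variable {K : Type*} [CommRing K] {m n : Type*} [Fintype m] [DecidableEq m]
  {L : Matrix m m K}

theorem inv_mul_mul_transpose_mul_inv_transpose (hL : IsUnit L.det) :
    L⁻¹ * (L * Lᵀ) * (L⁻¹)ᵀ = 1 := by
  rw [transpose_nonsing_inv, Matrix.nonsing_inv_mul_cancel_left L _ hL,
    mul_nonsing_inv _ (isUnit_det_transpose _ hL)]

theorem mul_inv_mul_inv_transpose_mul_transpose (hL : IsUnit L.det) (B : Matrix m m K) :
    L * (L⁻¹ * B * (L⁻¹)ᵀ) * Lᵀ = B := by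
  rw [transpose_nonsing_inv, Matrix.mul_assoc,
    Matrix.nonsing_inv_mul_cancel_right Lᵀ _ (isUnit_det_transpose _ hL),
    Matrix.mul_nonsing_inv_cancel_left L _ hL]

theorem transpose_mul_mul_inv_mul_inv_transpose_mul (hL : IsUnit L.det) (B : Matrix m m K)
    (Y : Matrix m n K) :
    (Lᵀ * Y)ᵀ * (L⁻¹ * B * (L⁻¹)ᵀ) * (Lᵀ * Y) = Yᵀ * B * Y := by
  calc (Lᵀ * Y)ᵀ * (L⁻¹ * B * (L⁻¹)ᵀ) * (Lᵀ * Y)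
      = Yᵀ * (L * (L⁻¹ * B * (L⁻¹)ᵀ) * Lᵀ) * Y := by
        simp only [transpose_mul, transpose_transpose, Matrix.mul_assoc]
    _ = Yᵀ * B * Y := by rw [mul_inv_mul_inv_transpose_mul_transpose hL]

end Whitening

theorem stmt5_general {m n : ℕ}
    (Ds Bs : Matrix (Fin m) (Fin m) ℝ)
    (Dr Br : Matrix (Fin n) (Fin n) ℝ)
    (Ls : Matrix (Fin m) (Fin m) ℝ) (hLs : IsCholeskyFactor Ls Ds)
    (Lr : Matrix (Fin n) (Fin n) ℝ) (hLr : IsCholeskyFactor Lr Dr) :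
    (∀ Z : Matrix (Fin m) (Fin n) ℝ,
        Zᵀ * Ds * Z = Dr → Zᵀ * Bs * Z = Br →
          (Lsᵀ * Z * (Lr⁻¹)ᵀ)ᵀ * (Lsᵀ * Z * (Lr⁻¹)ᵀ) = 1 ∧
          (Lsᵀ * Z * (Lr⁻¹)ᵀ)ᵀ * (Ls⁻¹ * Bs * (Ls⁻¹)ᵀ) * (Lsᵀ * Z * (Lr⁻¹)ᵀ)
            = Lr⁻¹ * Br * (Lr⁻¹)ᵀ) ∧
    (∀ U : Matrix (Fin m) (Fin n) ℝ,
        Uᵀ * U = 1 → Uᵀ * (Ls⁻¹ * Bs * (Ls⁻¹)ᵀ) * U = Lr⁻¹ * Br * (Lr⁻¹)ᵀ →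
          ∃ Z : Matrix (Fin m) (Fin n) ℝ,
            Zᵀ * Ds * Z = Dr ∧ Zᵀ * Bs * Z = Br ∧ U = Lsᵀ * Z * (Lr⁻¹)ᵀ) := by
  have hs := hLs.isUnit_det
  have hr := hLr.isUnit_det
  obtain ⟨-, -, rfl⟩ := hLs
  obtain ⟨-, -, rfl⟩ := hLr
  refine ⟨fun Z hD hB => ?_, fun U hU hB => ?_⟩
  · have congr_U : ∀ B, (Lsᵀ * Z * (Lr⁻¹)ᵀ)ᵀ * (Ls⁻¹ * B * (Ls⁻¹)ᵀ) * (Lsᵀ * Z * (Lr⁻¹)ᵀ)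
        = Lr⁻¹ * (Zᵀ * B * Z) * (Lr⁻¹)ᵀ := fun B => by
      rw [Matrix.mul_assoc Lsᵀ, transpose_mul_mul_inv_mul_inv_transpose_mul hs]
      simp only [transpose_mul, transpose_transpose, Matrix.mul_assoc]
    refine ⟨?_, by rw [congr_U, hB]⟩
    calc _ = (Lsᵀ * Z * (Lr⁻¹)ᵀ)ᵀ * (Ls⁻¹ * (Ls * Lsᵀ) * (Ls⁻¹)ᵀ) * (Lsᵀ * Z * (Lr⁻¹)ᵀ) :=
          by rw [inv_mul_mul_transpose_mul_inv_transpose hs, Matrix.mul_one]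
      _ = 1 := by rw [congr_U, hD, inv_mul_mul_transpose_mul_inv_transpose hr]
  · set Z := (Lsᵀ)⁻¹ * U * Lrᵀ with hZ_def
    have hZ : Lsᵀ * Z = U * Lrᵀ := by
      rw [hZ_def, Matrix.mul_assoc,
        Matrix.mul_nonsing_inv_cancel_left _ _ (isUnit_det_transpose _ hs)]
    have congr_Z : ∀ B, Zᵀ * B * Z = Lr * (Uᵀ * (Ls⁻¹ * B * (Ls⁻¹)ᵀ) * U) * Lrᵀ := fun B => by
      rw [← transpose_mul_mul_inv_mul_inv_transpose_mul hs B Z, hZ]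
      simp only [transpose_mul, transpose_transpose, Matrix.mul_assoc]
    refine ⟨Z, ?_, ?_, ?_⟩
    · rw [congr_Z, inv_mul_mul_transpose_mul_inv_transpose hs, Matrix.mul_one, hU, Matrix.mul_one]
    · rw [congr_Z, hB, mul_inv_mul_inv_transpose_mul_transpose hr]
    · rw [hZ, transpose_nonsing_inv,
        Matrix.mul_nonsing_inv_cancel_right _ _ (isUnit_det_transpose _ hr)]

/-- Equivalence between the two-matrix congruence problem and the orthonormal
reformulation, with the explicit correspondence `U = Lsᵀ Z Lr⁻ᵀ`. -/
theorem stmt5 {m n : ℕ} (hnm : n ≤ m)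
    (Ds Bs : Matrix (Fin m) (Fin m) ℝ) (hDs : Ds.PosDef) (hBs : Bs.PosDef)
    (Dr Br : Matrix (Fin n) (Fin n) ℝ) (hDr : Dr.PosDef) (hBr : Br.PosDef)
    (Ls : Matrix (Fin m) (Fin m) ℝ) (hLs : IsCholeskyFactor Ls Ds)
    (Lr : Matrix (Fin n) (Fin n) ℝ) (hLr : IsCholeskyFactor Lr Dr) :
    (∀ Z : Matrix (Fin m) (Fin n) ℝ,
        Zᵀ * Ds * Z = Dr → Zᵀ * Bs * Z = Br →
          (Lsᵀ * Z * (Lr⁻¹)ᵀ)ᵀ * (Lsᵀ * Z * (Lr⁻¹)ᵀ) = 1 ∧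
          (Lsᵀ * Z * (Lr⁻¹)ᵀ)ᵀ * (Ls⁻¹ * Bs * (Ls⁻¹)ᵀ) * (Lsᵀ * Z * (Lr⁻¹)ᵀ)
            = Lr⁻¹ * Br * (Lr⁻¹)ᵀ) ∧
    (∀ U : Matrix (Fin m) (Fin n) ℝ,
        Uᵀ * U = 1 → Uᵀ * (Ls⁻¹ * Bs * (Ls⁻¹)ᵀ) * U = Lr⁻¹ * Br * (Lr⁻¹)ᵀ →
          ∃ Z : Matrix (Fin m) (Fin n) ℝ,
            Zᵀ * Ds * Z = Dr ∧ Zᵀ * Bs * Z = Br ∧ U = Lsᵀ * Z * (Lr⁻¹)ᵀ) :=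
  stmt5_general Ds Bs Dr Br Ls hLs Lr hLr
end

section
/- Let A ∈ ℝ^{N×N}, let V ∈ ℝ^{N×n}, let A_1, …, A_k ∈ ℝ^{N×N} be a basis of matrices, let Φ = [vec(A_1) ⋯ vec(A_k)] ∈ ℝ^{N²×k} be the matrix of their vectorizations, and let P ∈ {0,1}^{N²×p} be a sampling matrix acting on vectorized matrices. Assume (1) vec(A) lies in the range of Φ, and (2) PᵀΦ has full column rank k. Then the least-squares problem min_{x ∈ ℝ^k} ‖Pᵀ vec(A) − PᵀΦ x‖₂² has a unique minimizer x* ∈ ℝ^k, and this minimizer satisfies ∑_{i=1}^{k} x*_i Vᵀ A_i V = Vᵀ A V; i.e., the matrix gappy POD approximation is exact. -/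
/-!
If `vec A = Φ c`, the sampled residual vanishes at `c`, so `c` is a least-squares minimizer
with value `0`. Any other minimizer also has residual `0`, i.e. solves `PᵀΦ y = PᵀΦ c`, and
full column rank of `PᵀΦ` forces `y = c`. Exactness is then linearity of `M ↦ Vᵀ M V`.
-/

open Matrix

namespace GappyPOD

variable {ι κ : Type*} [Fintype ι]

theorem eq_of_sum_mul_eq_sum_mul {v : ι → κ → ℝ} (hv : LinearIndependent ℝ v)
    {x y : ι → ℝ} (h : ∀ j, ∑ i, x i * v i j = ∑ i, y i * v i j) : x = y := by
  refine funext (Fintype.linearIndependent_iffₛ.mp hv x y (funext fun j => ?_))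
  simpa only [Finset.sum_apply, Pi.smul_apply, smul_eq_mul] using h j

variable [Fintype κ]

/-- `‖b - Φ x‖²`, where the columns of `Φ` are the vectors `v i`. -/
def residualSq (v : ι → κ → ℝ) (b : κ → ℝ) (x : ι → ℝ) : ℝ :=
  ∑ j, (b j - ∑ i, x i * v i j) ^ 2

theorem residualSq_nonneg (v : ι → κ → ℝ) (b : κ → ℝ) (x : ι → ℝ) :
    0 ≤ residualSq v b x :=
  Finset.sum_nonneg fun _ _ => sq_nonneg _

theorem residualSq_eq_zero_iff {v : ι → κ → ℝ} {b : κ → ℝ} {x : ι → ℝ} :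
    residualSq v b x = 0 ↔ ∀ j, ∑ i, x i * v i j = b j := by
  simp only [residualSq, Finset.sum_eq_zero_iff_of_nonneg (fun _ _ => sq_nonneg _),
    Finset.mem_univ, true_implies, sq_eq_zero_iff, sub_eq_zero]
  exact forall_congr' fun _ => eq_comm

theorem residualSq_isUniqueMin_of_consistent {v : ι → κ → ℝ} (hv : LinearIndependent ℝ v)
    {b : κ → ℝ} {c : ι → ℝ} (hc : ∀ j, ∑ i, c i * v i j = b j) :
    (∀ x, residualSq v b c ≤ residualSq v b x) ∧
      ∀ y, (∀ x, residualSq v b y ≤ residualSq v b x) → y = c := by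
  have hc₀ : residualSq v b c = 0 := residualSq_eq_zero_iff.mpr hc
  refine ⟨fun x => hc₀ ▸ residualSq_nonneg v b x, fun y hy => ?_⟩
  have hy₀ : residualSq v b y = 0 :=
    le_antisymm (hc₀ ▸ hy c) (residualSq_nonneg v b y)
  exact eq_of_sum_mul_eq_sum_mul hv fun j => by
    rw [residualSq_eq_zero_iff.mp hy₀ j, hc j]

end GappyPOD

open GappyPOD in
theorem stmt6_general {N k p n : ℕ}
    (A : Matrix (Fin N) (Fin N) ℝ)
    (Afam : Fin k → Matrix (Fin N) (Fin N) ℝ)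
    (V : Matrix (Fin N) (Fin n) ℝ)
    (ι : Fin p → Fin N × Fin N)
    (hrange : ∃ c : Fin k → ℝ, A = ∑ i : Fin k, c i • Afam i)
    (hrank : LinearIndependent ℝ
      (fun i : Fin k => fun j : Fin p => Afam i (ι j).1 (ι j).2)) :
    ∃ xs : Fin k → ℝ,
      (∀ x : Fin k → ℝ,
          ∑ j : Fin p, (A (ι j).1 (ι j).2 - ∑ i : Fin k, xs i * Afam i (ι j).1 (ι j).2) ^ 2
            ≤ ∑ j : Fin p,
                (A (ι j).1 (ι j).2 - ∑ i : Fin k, x i * Afam i (ι j).1 (ι j).2) ^ 2) ∧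
      (∀ y : Fin k → ℝ,
          (∀ x : Fin k → ℝ,
            ∑ j : Fin p, (A (ι j).1 (ι j).2 - ∑ i : Fin k, y i * Afam i (ι j).1 (ι j).2) ^ 2
              ≤ ∑ j : Fin p,
                  (A (ι j).1 (ι j).2 - ∑ i : Fin k, x i * Afam i (ι j).1 (ι j).2) ^ 2) →
          y = xs) ∧
      ∑ i : Fin k, xs i • (Vᵀ * Afam i * V) = Vᵀ * A * V := by
  obtain ⟨c, rfl⟩ := hrange
  have hsampled : ∀ j, ∑ i, c i * Afam i (ι j).1 (ι j).2 = (∑ i, c i • Afam i) (ι j).1 (ι j).2 :=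
    fun j => by simp only [Matrix.sum_apply, Matrix.smul_apply, smul_eq_mul]
  obtain ⟨hmin, hunique⟩ := residualSq_isUniqueMin_of_consistent hrank hsampled
  refine ⟨c, hmin, hunique, ?_⟩
  simp only [Matrix.mul_sum, Matrix.sum_mul, Matrix.mul_smul, Matrix.smul_mul]

/-- Exactness of matrix gappy POD: if `vec A` lies in the span of the vectorized basis
matrices `Afam i` and the sampled (vectorized) basis has full column rank, then the
sampled least-squares problem has a unique minimizer `xs`, and the resulting
approximation `∑ i, xs i • Vᵀ (Afam i) V` equals `Vᵀ A V`. The sampling matrix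
`P ∈ {0,1}^{N² × p}` is encoded by the injective map `ι` selecting `p` entries of a
vectorized `N × N` matrix, so that `Pᵀ vec M = fun j => M (ι j).1 (ι j).2`. -/
theorem stmt6 {N k p n : ℕ}
    (A : Matrix (Fin N) (Fin N) ℝ)
    (Afam : Fin k → Matrix (Fin N) (Fin N) ℝ)
    (V : Matrix (Fin N) (Fin n) ℝ)
    (ι : Fin p → Fin N × Fin N) (hι : Function.Injective ι)
    (hrange : ∃ c : Fin k → ℝ, A = ∑ i : Fin k, c i • Afam i)
    (hrank : LinearIndependent ℝ
      (fun i : Fin k => fun j : Fin p => Afam i (ι j).1 (ι j).2)) :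
    ∃ xs : Fin k → ℝ,
      (∀ x : Fin k → ℝ,
          ∑ j : Fin p, (A (ι j).1 (ι j).2 - ∑ i : Fin k, xs i * Afam i (ι j).1 (ι j).2) ^ 2
            ≤ ∑ j : Fin p,
                (A (ι j).1 (ι j).2 - ∑ i : Fin k, x i * Afam i (ι j).1 (ι j).2) ^ 2) ∧
      (∀ y : Fin k → ℝ,
          (∀ x : Fin k → ℝ,
            ∑ j : Fin p, (A (ι j).1 (ι j).2 - ∑ i : Fin k, y i * Afam i (ι j).1 (ι j).2) ^ 2
              ≤ ∑ j : Fin p,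
                  (A (ι j).1 (ι j).2 - ∑ i : Fin k, x i * Afam i (ι j).1 (ι j).2) ^ 2) →
          y = xs) ∧
      ∑ i : Fin k, xs i • (Vᵀ * Afam i * V) = Vᵀ * A * V :=
  stmt6_general A Afam V ι hrange hrank
end

section
/- Let S ∈ {0,1}^{N×m} be a sampling matrix (m distinct columns of the N×N identity matrix), let Φ̃ ∈ ℝ^{N×n} satisfy Φ̃ᵀΦ̃ = Iₙ, let c̃ ∈ ℝ^N, and assume m ≥ n. Then there exists a matrix X ∈ ℝ^{m×n} satisfying XᵀX = Iₙ and Xᵀ Sᵀ c̃ = Φ̃ᵀ c̃ if and only if either (‖Φ̃ᵀ c̃‖₂ = ‖Sᵀ c̃‖₂ and m = n) or (‖Φ̃ᵀ c̃‖₂ ≤ ‖Sᵀ c̃‖₂ and m > n). -/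
/-!
Orthonormal columns make `X` an isometry, so `card κ ≤ card ι` and, by Bessel's inequality,
`‖Xᵀ s‖ ≤ ‖s‖`, with equality when `X` is square (then also `X Xᵀ = 1`). Conversely, if
`‖b‖ ≤ ‖s‖`, extend `b` by zero along a coordinate embedding `E : ℝ^κ → ℝ^ι` and add a vector
supported on a spare coordinate (needed unless `‖b‖ = ‖s‖`) to get `v` with `Eᵀ v = b` and
`‖v‖ = ‖s‖`. Then `X = Qᵀ E` works, for `Q` the Householder reflection taking `s` to `v`.
-/

open Matrix

/-- Euclidean norm of a real vector. -/
noncomputable def enorm {k : ℕ} (v : Fin k → ℝ) : ℝ :=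
  Real.sqrt (∑ i : Fin k, v i ^ 2)

namespace Matrix

variable {ι κ : Type*} [Fintype ι]

theorem dotProduct_self_nonneg_real (v : ι → ℝ) : 0 ≤ v ⬝ᵥ v :=
  Finset.sum_nonneg fun i _ => mul_self_nonneg (v i)

theorem exists_transpose_mul_self_eq_one_mulVec_eq [DecidableEq ι] {s v : ι → ℝ}
    (h : s ⬝ᵥ s = v ⬝ᵥ v) : ∃ Q : Matrix ι ι ℝ, Qᵀ * Q = 1 ∧ Q *ᵥ s = v := by
  by_cases hsv : s = v
  · exact ⟨1, by simp, by simp [hsv]⟩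
  set w := s - v
  set d := w ⬝ᵥ w
  have hd : d ≠ 0 := fun h0 => hsv (sub_eq_zero.mp (dotProduct_self_eq_zero.mp h0))
  have hws : d = 2 * (w ⬝ᵥ s) := by
    simp only [d, w, sub_dotProduct, dotProduct_sub, dotProduct_comm v s]
    linarith
  -- reflection in `w⊥`; since `‖s‖ = ‖v‖`, `2 ⟪w, s⟫ = ‖w‖²`, so it sends `s` to `s - w = v`
  set Q := 1 - (2 / d) • vecMulVec w w
  have hQt : Qᵀ = Q := by simp [Q]
  refine ⟨Q, ?_, ?_⟩
  · rw [hQt]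
    simp only [Q, sub_mul, mul_sub, Matrix.one_mul, Matrix.mul_one, Matrix.smul_mul,
      Matrix.mul_smul, vecMulVec_mul_vecMulVec, vecMulVec_smul, smul_smul]
    rw [show 2 / d * (2 / d * d) = 2 / d + 2 / d by field_simp; ring]
    module
  · rw [sub_mulVec, one_mulVec, smul_mulVec, vecMulVec_mulVec, op_smul_eq_smul, smul_smul,
      show 2 / d * (w ⬝ᵥ s) = 1 by field_simp; linarith, one_smul, sub_sub_cancel]

theorem transpose_submatrix_one_mulVec [DecidableEq ι] (e : κ → ι) (v : ι → ℝ) :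
    ((1 : Matrix ι ι ℝ).submatrix id e)ᵀ *ᵥ v = v ∘ e := by
  ext j
  simp [mulVec, dotProduct, one_apply]

theorem transpose_submatrix_one_mul_self [DecidableEq ι] [DecidableEq κ] (e : κ ↪ ι) :
    ((1 : Matrix ι ι ℝ).submatrix id e)ᵀ * (1 : Matrix ι ι ℝ).submatrix id e = 1 := by
  rw [transpose_submatrix, transpose_one]
  have := submatrix_mul (1 : Matrix ι ι ℝ) 1 e (Equiv.refl ι) e (Equiv.refl ι).bijective
  rw [Equiv.coe_refl, Matrix.one_mul, submatrix_one_embedding] at this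
  exact this.symm

variable [Fintype κ]

theorem dotProduct_mulVec_eq_transpose_mulVec_dotProduct (X : Matrix ι κ ℝ) (s : ι → ℝ)
    (y : κ → ℝ) : s ⬝ᵥ (X *ᵥ y) = (Xᵀ *ᵥ s) ⬝ᵥ y := by
  rw [dotProduct_mulVec, mulVec_transpose]

variable [DecidableEq κ]

theorem dotProduct_mulVec_self_of_transpose_mul_self_eq_one {X : Matrix ι κ ℝ}
    (hX : Xᵀ * X = 1) (y : κ → ℝ) : (X *ᵥ y) ⬝ᵥ (X *ᵥ y) = y ⬝ᵥ y := by
  rw [dotProduct_mulVec_eq_transpose_mulVec_dotProduct, mulVec_mulVec, hX, one_mulVec,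
    dotProduct_comm]

theorem transpose_mulVec_dotProduct_self_le {X : Matrix ι κ ℝ} (hX : Xᵀ * X = 1)
    (s : ι → ℝ) : (Xᵀ *ᵥ s) ⬝ᵥ (Xᵀ *ᵥ s) ≤ s ⬝ᵥ s := by
  set y := Xᵀ *ᵥ s
  have hst : s ⬝ᵥ (X *ᵥ y) = y ⬝ᵥ y := dotProduct_mulVec_eq_transpose_mulVec_dotProduct X s y
  have htt : (X *ᵥ y) ⬝ᵥ (X *ᵥ y) = y ⬝ᵥ y :=
    dotProduct_mulVec_self_of_transpose_mul_self_eq_one hX y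
  have := dotProduct_self_nonneg_real (s - X *ᵥ y)
  simp only [sub_dotProduct, dotProduct_sub, dotProduct_comm (X *ᵥ y) s] at this
  linarith

theorem transpose_mulVec_dotProduct_self_eq [DecidableEq ι] (e : ι ≃ κ) {X : Matrix ι κ ℝ}
    (hX : Xᵀ * X = 1) (s : ι → ℝ) : (Xᵀ *ᵥ s) ⬝ᵥ (Xᵀ *ᵥ s) = s ⬝ᵥ s := by
  refine dotProduct_mulVec_self_of_transpose_mul_self_eq_one ?_ s
  rw [transpose_transpose]
  exact (mul_eq_one_comm_of_equiv e.symm).mp hX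

theorem card_le_of_transpose_mul_self_eq_one {X : Matrix ι κ ℝ} (hX : Xᵀ * X = 1) :
    Fintype.card κ ≤ Fintype.card ι :=
  calc Fintype.card κ = (Xᵀ * X).rank := by rw [hX, rank_one]
    _ ≤ X.rank := rank_mul_le_right _ _
    _ ≤ Fintype.card ι := rank_le_card_height X

theorem exists_transpose_mul_self_eq_one_transpose_mulVec_eq [DecidableEq ι] (e : κ ↪ ι)
    {s w : ι → ℝ} {b : κ → ℝ} (hw : ∀ j, w (e j) = 0) (hs : s ⬝ᵥ s = b ⬝ᵥ b + w ⬝ᵥ w) :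
    ∃ X : Matrix ι κ ℝ, Xᵀ * X = 1 ∧ Xᵀ *ᵥ s = b := by
  set E := (1 : Matrix ι ι ℝ).submatrix id e
  have hE : Eᵀ * E = 1 := transpose_submatrix_one_mul_self e
  have hEw : Eᵀ *ᵥ w = 0 := by
    rw [transpose_submatrix_one_mulVec]
    exact funext hw
  set v := E *ᵥ b + w
  have hv : Eᵀ *ᵥ v = b := by
    rw [mulVec_add, mulVec_mulVec, hE, one_mulVec, hEw, add_zero]
  have hsv : s ⬝ᵥ s = v ⬝ᵥ v := by
    have hbw : (E *ᵥ b) ⬝ᵥ w = 0 := by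
      rw [dotProduct_comm, dotProduct_mulVec_eq_transpose_mulVec_dotProduct, hEw,
        zero_dotProduct]
    simp only [v, add_dotProduct, dotProduct_add, dotProduct_comm w (E *ᵥ b), hbw,
      dotProduct_mulVec_self_of_transpose_mul_self_eq_one hE, hs]
    ring
  obtain ⟨Q, hQ, hQs⟩ := exists_transpose_mul_self_eq_one_mulVec_eq hsv
  refine ⟨Qᵀ * E, ?_, ?_⟩
  · rw [transpose_mul, transpose_transpose, Matrix.mul_assoc, ← Matrix.mul_assoc Q,
      mul_eq_one_comm.mp hQ, Matrix.one_mul, hE]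
  · rw [transpose_mul, transpose_transpose, ← mulVec_mulVec, hQs, hv]

theorem exists_transpose_mul_self_eq_one_transpose_mulVec_eq_iff [DecidableEq ι]
    (s : ι → ℝ) (b : κ → ℝ) :
    (∃ X : Matrix ι κ ℝ, Xᵀ * X = 1 ∧ Xᵀ *ᵥ s = b) ↔
      (b ⬝ᵥ b = s ⬝ᵥ s ∧ Fintype.card ι = Fintype.card κ) ∨
        (b ⬝ᵥ b ≤ s ⬝ᵥ s ∧ Fintype.card κ < Fintype.card ι) := by
  constructor
  · rintro ⟨X, hX, rfl⟩
    rcases (card_le_of_transpose_mul_self_eq_one hX).eq_or_lt with hcard | hlt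
    · exact .inl ⟨transpose_mulVec_dotProduct_self_eq (Fintype.equivOfCardEq hcard.symm) hX s,
        hcard.symm⟩
    · exact .inr ⟨transpose_mulVec_dotProduct_self_le hX s, hlt⟩
  · rintro (⟨hbs, hcard⟩ | ⟨hbs, hlt⟩)
    · exact exists_transpose_mul_self_eq_one_transpose_mulVec_eq
        (Fintype.equivOfCardEq hcard).symm.toEmbedding (w := 0) (fun _ => rfl) (by simp [hbs])
    · obtain ⟨f⟩ : Nonempty (Option κ ↪ ι) :=
        Function.Embedding.nonempty_of_card_le (by rwa [Fintype.card_option])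
      refine exists_transpose_mul_self_eq_one_transpose_mulVec_eq
        (Function.Embedding.some.trans f) (w := √(s ⬝ᵥ s - b ⬝ᵥ b) • Pi.single (f none) 1)
        (fun j => ?_) ?_
      · simp [f.injective.ne (Option.some_ne_none j)]
      · rw [smul_dotProduct, dotProduct_smul, single_dotProduct, Pi.single_eq_same, smul_eq_mul,
          smul_eq_mul, mul_one, ← mul_assoc, Real.mul_self_sqrt (by linarith)]
        ring

end Matrix

theorem enorm_eq_sqrt_dotProduct {k : ℕ} (v : Fin k → ℝ) : _root_.enorm v = √(v ⬝ᵥ v) := by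
  simp [_root_.enorm, dotProduct, sq]

/-- The sampling matrix `S` is encoded by `ι`, so that `Sᵀ c̃ = fun j => c̃ (ι j)`. -/
theorem stmt7_general {N m n : ℕ}
    (ι : Fin m → Fin N)
    (Phi : Matrix (Fin N) (Fin n) ℝ)
    (c : Fin N → ℝ) :
    (∃ X : Matrix (Fin m) (Fin n) ℝ,
        Xᵀ * X = 1 ∧ Xᵀ.mulVec (fun j => c (ι j)) = Phiᵀ.mulVec c)
      ↔ ((_root_.enorm (Phiᵀ.mulVec c) = _root_.enorm (fun j => c (ι j)) ∧ m = n) ∨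
         (_root_.enorm (Phiᵀ.mulVec c) ≤ _root_.enorm (fun j => c (ι j)) ∧ n < m)) := by
  rw [exists_transpose_mul_self_eq_one_transpose_mulVec_eq_iff, Fintype.card_fin,
    Fintype.card_fin, enorm_eq_sqrt_dotProduct, enorm_eq_sqrt_dotProduct,
    Real.sqrt_inj (dotProduct_self_nonneg_real _) (dotProduct_self_nonneg_real _),
    Real.sqrt_le_sqrt_iff (dotProduct_self_nonneg_real _)]

/-- Solvability of the two-term Taylor equation (Lemma on quadratic solvability):
an `m × n` matrix `X` with orthonormal columns satisfying `Xᵀ Sᵀ c̃ = Φ̃ᵀ c̃` exists iff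
either the two norms agree and `m = n`, or `‖Φ̃ᵀ c̃‖₂ ≤ ‖Sᵀ c̃‖₂` and `m > n`. The
sampling matrix `S` (distinct columns of the identity) is encoded by the injective map
`ι`, so that `Sᵀ c̃ = fun j => c̃ (ι j)`. -/
theorem stmt7 {N m n : ℕ} (hnm : n ≤ m)
    (ι : Fin m → Fin N) (hι : Function.Injective ι)
    (Phi : Matrix (Fin N) (Fin n) ℝ) (hPhi : Phiᵀ * Phi = 1)
    (c : Fin N → ℝ) :
    (∃ X : Matrix (Fin m) (Fin n) ℝ,
        Xᵀ * X = 1 ∧ Xᵀ.mulVec (fun j => c (ι j)) = Phiᵀ.mulVec c)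
      ↔ ((_root_.enorm (Phiᵀ.mulVec c) = _root_.enorm (fun j => c (ι j)) ∧ m = n) ∨
         (_root_.enorm (Phiᵀ.mulVec c) ≤ _root_.enorm (fun j => c (ι j)) ∧ n < m)) :=
  stmt7_general ι Phi c
end

section
/- Let A ∈ ℝ^{N×N} be symmetric positive definite with lower-triangular Cholesky factor L (A = LLᵀ), let V ∈ ℝ^{N×n} have full column rank, let L_φ be the lower-triangular Cholesky factor of VᵀAV, let c ∈ ℝ^N, and let S ∈ ℝ^{N×m} consist of the first m columns of the N×N identity matrix with m ≥ n. Then there exists Z ∈ ℝ^{m×n} satisfying both Zᵀ (SᵀAS) Z = VᵀAV and Zᵀ Sᵀ c = Vᵀ c if and only if there exists X ∈ ℝ^{m×n} satisfying XᵀX = Iₙ and Xᵀ Sᵀ L⁻¹ c = L_φ⁻¹ Vᵀ c. The correspondence is given by X = (Sᵀ Lᵀ S) Z L_φ⁻ᵀ. -/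
open Matrix

/-!
Let `M = Sᵀ L S` be the leading `m × m` block of `L`. Because `L` is lower triangular, the rows
of `L` indexed by `S` only see its first `m` columns, so `M Mᵀ = Sᵀ A S` and
`M (Sᵀ L⁻¹ c) = Sᵀ c`. Hence `X = Mᵀ Z L_φ⁻ᵀ` is an invertible change of variables turning
`Zᵀ (M Mᵀ) Z = L_φ L_φᵀ` into `Xᵀ X = 1` and `Zᵀ M (Sᵀ L⁻¹ c) = Vᵀ c` into
`Xᵀ (Sᵀ L⁻¹ c) = L_φ⁻¹ Vᵀ c`.
-/

namespace Matrix.IsLowerTriangular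

variable {R : Type*} [NonUnitalNonAssocSemiring R] {N m : ℕ} {L : Matrix (Fin N) (Fin N) R}

theorem sum_castLE (h : m ≤ N) (hL : L.IsLowerTriangular) (i : Fin m) (g : Fin N → R) :
    ∑ k, L (i.castLE h) k * g k = ∑ j : Fin m, L (i.castLE h) (j.castLE h) * g (j.castLE h) := by
  rw [← Finset.sum_subset (Finset.subset_univ (Finset.univ.map (Fin.castLEEmb h))) ?_,
    Finset.sum_map]
  · rfl
  intro k _ hk
  have hik : i.castLE h < k := by
    by_contra! hki
    exact hk (Finset.mem_map.mpr ⟨⟨k, (Fin.le_def.mp hki).trans_lt i.isLt⟩, Finset.mem_univ _, rfl⟩)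
  rw [hL (i := i.castLE h) (j := k) hik, zero_mul]

theorem submatrix_castLE_mul {o p : Type*} (h : m ≤ N) (hL : L.IsLowerTriangular)
    (B : Matrix (Fin N) o R) (f : p → o) :
    (L * B).submatrix (Fin.castLE h) f
      = L.submatrix (Fin.castLE h) (Fin.castLE h) * B.submatrix (Fin.castLE h) f := by
  ext i j
  exact hL.sum_castLE h i fun k => B k (f j)

theorem mulVec_comp_castLE (h : m ≤ N) (hL : L.IsLowerTriangular) (v : Fin N → R) :
    (L *ᵥ v) ∘ Fin.castLE h = L.submatrix (Fin.castLE h) (Fin.castLE h) *ᵥ (v ∘ Fin.castLE h) := by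
  funext i
  simp only [Function.comp_apply, mulVec, dotProduct, submatrix_apply]
  exact hL.sum_castLE h i v

end Matrix.IsLowerTriangular

namespace IsCholeskyFactor

variable {k : ℕ} {L D : Matrix (Fin k) (Fin k) ℝ}

theorem isLowerTriangular (hL : IsCholeskyFactor L D) : L.IsLowerTriangular :=
  fun _ _ hij => hL.1 _ _ hij

theorem isUnit_det_s14 (hL : IsCholeskyFactor L D) : IsUnit L.det := by
  rw [det_of_isLowerTriangular L hL.isLowerTriangular]
  exact (Finset.prod_pos fun i _ => hL.2.1 i).ne'.isUnit

theorem submatrix_castLE {m : ℕ} (h : m ≤ k) (hL : IsCholeskyFactor L D) :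
    IsCholeskyFactor (L.submatrix (Fin.castLE h) (Fin.castLE h))
      (D.submatrix (Fin.castLE h) (Fin.castLE h)) := by
  refine ⟨fun i j hij => hL.1 _ _ hij, fun i => hL.2.1 _, ?_⟩
  rw [← hL.2.2, hL.isLowerTriangular.submatrix_castLE_mul h, transpose_submatrix]

end IsCholeskyFactor

section ChangeOfVariables

variable {R : Type*} [CommRing R] {m n : Type*} [Fintype m] [Fintype n] [DecidableEq n]
  {M : Matrix m m R} {P : Matrix n n R}

theorem transpose_mul_self_change_of_variables_eq_one_iff (hP : IsUnit P.det)
    (Z : Matrix m n R) :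
    (Mᵀ * Z * P⁻¹ᵀ)ᵀ * (Mᵀ * Z * P⁻¹ᵀ) = 1 ↔ Zᵀ * (M * Mᵀ) * Z = P * Pᵀ := by
  have hPT : IsUnit Pᵀ.det := isUnit_det_transpose P hP
  have hX : (Mᵀ * Z * P⁻¹ᵀ)ᵀ * (Mᵀ * Z * P⁻¹ᵀ) = P⁻¹ * (Zᵀ * (M * Mᵀ) * Z) * Pᵀ⁻¹ := by
    simp only [transpose_mul, transpose_transpose, transpose_nonsing_inv, Matrix.mul_assoc]
  rw [hX]
  generalize Zᵀ * (M * Mᵀ) * Z = Y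
  constructor
  · intro h
    calc Y = P * (P⁻¹ * Y * Pᵀ⁻¹) * Pᵀ := by
          rw [Matrix.mul_assoc, nonsing_inv_mul_cancel_right _ _ hPT,
            mul_nonsing_inv_cancel_left _ _ hP]
      _ = P * Pᵀ := by rw [h, Matrix.mul_one]
  · intro h
    rw [h, nonsing_inv_mul_cancel_left _ _ hP, mul_nonsing_inv _ hPT]

theorem transpose_change_of_variables_mulVec_eq_iff (hP : IsUnit P.det) (Z : Matrix m n R)
    (u : m → R) (w : n → R) :
    (Mᵀ * Z * P⁻¹ᵀ)ᵀ *ᵥ u = P⁻¹ *ᵥ w ↔ Zᵀ *ᵥ (M *ᵥ u) = w := by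
  have hX : (Mᵀ * Z * P⁻¹ᵀ)ᵀ = P⁻¹ * Zᵀ * M := by
    simp only [transpose_mul, transpose_transpose, Matrix.mul_assoc]
  rw [hX, ← mulVec_mulVec, ← mulVec_mulVec]
  refine ⟨fun h => ?_, fun h => by rw [h]⟩
  have hPh := congrArg (P *ᵥ ·) h
  rwa [mulVec_mulVec (Zᵀ *ᵥ (M *ᵥ u)) P, mulVec_mulVec w P, mul_nonsing_inv _ hP, one_mulVec,
    one_mulVec] at hPh

end ChangeOfVariables

theorem stmt14_general {N m n : ℕ} (hmN : m ≤ N)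
    (A : Matrix (Fin N) (Fin N) ℝ)
    (L : Matrix (Fin N) (Fin N) ℝ) (hL : IsCholeskyFactor L A)
    (V : Matrix (Fin N) (Fin n) ℝ)
    (Lphi : Matrix (Fin n) (Fin n) ℝ) (hLphi : IsCholeskyFactor Lphi (Vᵀ * A * V))
    (c : Fin N → ℝ)
    (cl : Fin m → Fin N) (hcl : cl = Fin.castLE hmN) :
    (∀ Z : Matrix (Fin m) (Fin n) ℝ,
        Zᵀ * (A.submatrix cl cl) * Z = Vᵀ * A * V →
        Zᵀ.mulVec (fun j => c (cl j)) = Vᵀ.mulVec c →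
          (Lᵀ.submatrix cl cl * Z * (Lphi⁻¹)ᵀ)ᵀ * (Lᵀ.submatrix cl cl * Z * (Lphi⁻¹)ᵀ) = 1 ∧
          (Lᵀ.submatrix cl cl * Z * (Lphi⁻¹)ᵀ)ᵀ.mulVec (fun j => L⁻¹.mulVec c (cl j))
            = Lphi⁻¹.mulVec (Vᵀ.mulVec c)) ∧
    (∀ X : Matrix (Fin m) (Fin n) ℝ,
        Xᵀ * X = 1 →
        Xᵀ.mulVec (fun j => L⁻¹.mulVec c (cl j)) = Lphi⁻¹.mulVec (Vᵀ.mulVec c) →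
          ∃ Z : Matrix (Fin m) (Fin n) ℝ,
            Zᵀ * (A.submatrix cl cl) * Z = Vᵀ * A * V ∧
            Zᵀ.mulVec (fun j => c (cl j)) = Vᵀ.mulVec c ∧
            X = Lᵀ.submatrix cl cl * Z * (Lphi⁻¹)ᵀ) := by
  subst hcl
  set M := L.submatrix (Fin.castLE hmN) (Fin.castLE hmN)
  have hM : IsCholeskyFactor M (A.submatrix (Fin.castLE hmN) (Fin.castLE hmN)) :=
    hL.submatrix_castLE hmN
  have hMc : M *ᵥ (fun j => (L⁻¹ *ᵥ c) (Fin.castLE hmN j)) = fun j => c (Fin.castLE hmN j) := by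
    rw [← Function.comp_def, ← hL.isLowerTriangular.mulVec_comp_castLE hmN, mulVec_mulVec,
      mul_nonsing_inv _ hL.isUnit_det_s14, one_mulVec, Function.comp_def]
  have hP := hLphi.isUnit_det_s14
  rw [← hLphi.2.2, ← hM.2.2, ← transpose_submatrix]
  refine ⟨fun Z hZ hZc => ⟨(transpose_mul_self_change_of_variables_eq_one_iff hP Z).2 hZ,
    (transpose_change_of_variables_mulVec_eq_iff hP Z _ _).2 (by rw [hMc, hZc])⟩,
    fun X hX hXc => ⟨Mᵀ⁻¹ * X * Lphiᵀ, ?_⟩⟩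
  have hMT : IsUnit Mᵀ.det := isUnit_det_transpose M hM.isUnit_det_s14
  have hXZ : X = Mᵀ * (Mᵀ⁻¹ * X * Lphiᵀ) * Lphi⁻¹ᵀ := by
    simp only [transpose_nonsing_inv, Matrix.mul_assoc]
    rw [mul_nonsing_inv _ (isUnit_det_transpose Lphi hP), Matrix.mul_one,
      mul_nonsing_inv_cancel_left _ _ hMT]
  rw [hXZ] at hX hXc
  rw [← hMc]
  exact ⟨(transpose_mul_self_change_of_variables_eq_one_iff hP _).1 hX,
    (transpose_change_of_variables_mulVec_eq_iff hP _ _ _).1 hXc, hXZ⟩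

/-- Equivalence between the gradient/Hessian matching conditions and the orthonormal
reformulation, with the explicit correspondence `X = (Sᵀ Lᵀ S) Z L_φ⁻ᵀ`. Here `S`
consists of the first `m` columns of the `N × N` identity, encoded by `Fin.castLE`, so
that `Sᵀ M S = M.submatrix (Fin.castLE hmN) (Fin.castLE hmN)` and
`Sᵀ v = fun j => v (Fin.castLE hmN j)`. -/
theorem stmt14 {N m n : ℕ} (hnm : n ≤ m) (hmN : m ≤ N)
    (A : Matrix (Fin N) (Fin N) ℝ) (hA : A.PosDef)
    (L : Matrix (Fin N) (Fin N) ℝ) (hL : IsCholeskyFactor L A)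
    (V : Matrix (Fin N) (Fin n) ℝ) (hV : V.rank = n)
    (Lphi : Matrix (Fin n) (Fin n) ℝ) (hLphi : IsCholeskyFactor Lphi (Vᵀ * A * V))
    (c : Fin N → ℝ)
    (cl : Fin m → Fin N) (hcl : cl = Fin.castLE hmN) :
    (∀ Z : Matrix (Fin m) (Fin n) ℝ,
        Zᵀ * (A.submatrix cl cl) * Z = Vᵀ * A * V →
        Zᵀ.mulVec (fun j => c (cl j)) = Vᵀ.mulVec c →
          (Lᵀ.submatrix cl cl * Z * (Lphi⁻¹)ᵀ)ᵀ * (Lᵀ.submatrix cl cl * Z * (Lphi⁻¹)ᵀ) = 1 ∧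
          (Lᵀ.submatrix cl cl * Z * (Lphi⁻¹)ᵀ)ᵀ.mulVec (fun j => L⁻¹.mulVec c (cl j))
            = Lphi⁻¹.mulVec (Vᵀ.mulVec c)) ∧
    (∀ X : Matrix (Fin m) (Fin n) ℝ,
        Xᵀ * X = 1 →
        Xᵀ.mulVec (fun j => L⁻¹.mulVec c (cl j)) = Lphi⁻¹.mulVec (Vᵀ.mulVec c) →
          ∃ Z : Matrix (Fin m) (Fin n) ℝ,
            Zᵀ * (A.submatrix cl cl) * Z = Vᵀ * A * V ∧
            Zᵀ.mulVec (fun j => c (cl j)) = Vᵀ.mulVec c ∧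
            X = Lᵀ.submatrix cl cl * Z * (Lphi⁻¹)ᵀ) :=
  stmt14_general hmN A L hL V Lphi hLphi c cl hcl
end
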